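/- For fixed m ∈ ℝ, w ∈ ℝ^4, γ > 0, q > 1, and F convex differentiable with F'(p) ∈ ℝ, the function p ↦ Q_{m,w}(p,0) is continuous and strictly increasing on [prox_{γF}(m), +∞) and tends to +∞ as p → +∞; moreover Q_{m,w}(prox_{γF}(m), 0) = −(γ/q')|P_K w|^q ≤ 0. Consequently Q_{m,w}(·,0) has a unique root p* ≥ prox_{γF}(m) whenever Q_{m,w}(prox_{γF}(m),0) < 0. -/

import Mathlib

open scoped BigOperators
open Classical

noncomputable section

/-- Euclidean norm on ℝ⁴. -/
def nrm4 (w : Fin 4 → ℝ) : ℝ := Real.sqrt (∑ i, (w i) ^ 2)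

/-- Euclidean projection onto `K = ℝ₊ × ℝ₋ × ℝ₊ × ℝ₋`. -/
def PK (w : Fin 4 → ℝ) : Fin 4 → ℝ := ![max (w 0) 0, min (w 1) 0, max (w 2) 0, min (w 3) 0]

/-- The auxiliary function `Q_{m,w}(p,δ)`. -/
def Qfun (q q' γ : ℝ) (F' : ℝ → ℝ) (m : ℝ) (w : Fin 4 → ℝ) (p δ : ℝ) : ℝ :=
  (p + γ * F' p - m + δ) *
      (p + γ ^ (2 / q) * q' ^ (1 - 2 / q) * (p + γ * F' p - m + δ) ^ (1 - 2 / q)) ^ q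
    - (γ / q') * nrm4 (PK w) ^ q

/-! Writing `g(p) = p + γF'(p) - m` and `c = γ^(2/q) q'^(1-2/q)`, on `[z₀, ∞)` we have `g ≥ 0`
and `Q_{m,w}(p,0) = (p g^(1/q) + c g^(1-1/q))^q - (γ/q')|P_K w|^q`. Since `g` is strictly
increasing with `g(z₀) = 0` and `g → ∞`, the base is continuous, strictly increasing and unbounded,
and the root comes from the intermediate value theorem. -/

open Set Filter

theorem existsUnique_eq_of_strictMonoOn_Ici {f : ℝ → ℝ} {a y : ℝ}
    (hcont : ContinuousOn f (Ici a)) (hmono : StrictMonoOn f (Ici a))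
    (htop : Tendsto f atTop atTop) (hy : f a ≤ y) : ∃! p, a ≤ p ∧ f p = y := by
  obtain ⟨p, hp, rfl⟩ := intermediate_value_Ici hcont htop hy
  exact ⟨p, ⟨hp, rfl⟩, fun p' hp' => hmono.injOn hp'.1 hp hp'.2⟩

/-- For `q < 2` the factor `g ^ (1 - 2 / q)` blows up at `g = 0`; the right-hand side has no
singular factor. -/
theorem mul_add_rpow_eq_rpow {q g p c : ℝ} (hq : 0 < q) (hq1 : q ≠ 1) (hg : 0 ≤ g)
    (hp : 0 ≤ p) (hc : 0 ≤ c) :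
    g * (p + c * g ^ (1 - 2 / q)) ^ q = (p * g ^ (1 / q) + c * g ^ (1 - 1 / q)) ^ q := by
  rcases hg.eq_or_lt with rfl | hg
  · have h1q : 1 - 1 / q ≠ 0 := by
      rw [sub_ne_zero, ne_comm, one_div, inv_ne_one]; exact hq1
    rw [zero_mul, Real.zero_rpow (one_div_pos.2 hq).ne', Real.zero_rpow h1q, mul_zero, mul_zero,
      add_zero, Real.zero_rpow hq.ne']
  have hsplit : g ^ (1 - 1 / q) = g ^ (1 / q) * g ^ (1 - 2 / q) := by
    rw [← Real.rpow_add hg]; ring_nf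
  have hroot : (g ^ (1 / q)) ^ q = g := by
    rw [← Real.rpow_mul hg.le, one_div_mul_cancel hq.ne', Real.rpow_one]
  have hfactor : p * g ^ (1 / q) + c * g ^ (1 - 1 / q) =
      g ^ (1 / q) * (p + c * g ^ (1 - 2 / q)) := by
    rw [hsplit]; ring
  rw [hfactor, Real.mul_rpow (by positivity) (by positivity), hroot]

def blendPow (q c : ℝ) (g : ℝ → ℝ) (p : ℝ) : ℝ :=
  (p * g p ^ (1 / q) + c * g p ^ (1 - 1 / q)) ^ q

section BlendPow

variable {s : Set ℝ} {g : ℝ → ℝ} {q c : ℝ}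

theorem blendPow_strictMonoOn (hs : s ⊆ Ici 0) (hg : StrictMonoOn g s)
    (hg0 : ∀ p ∈ s, 0 ≤ g p) (hq : 1 ≤ q) (hc : 0 ≤ c) : StrictMonoOn (blendPow q c g) s := by
  intro a ha b hb hab
  have hgab : g a < g b := hg ha hb hab
  have hq0 : 0 < q := by linarith
  have hga := hg0 a ha
  have ha0 : 0 ≤ a := hs ha
  have hroot : g a ^ (1 / q) ≤ g b ^ (1 / q) := Real.rpow_le_rpow hga hgab.le (by positivity)
  have hroot_pos : 0 < g b ^ (1 / q) := Real.rpow_pos_of_pos (hga.trans_lt hgab) _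
  have hfirst : a * g a ^ (1 / q) < b * g b ^ (1 / q) :=
    calc a * g a ^ (1 / q) ≤ a * g b ^ (1 / q) := mul_le_mul_of_nonneg_left hroot ha0
      _ < b * g b ^ (1 / q) := mul_lt_mul_of_pos_right hab hroot_pos
  have hsecond : c * g a ^ (1 - 1 / q) ≤ c * g b ^ (1 - 1 / q) := by
    have : 1 / q ≤ 1 := (div_le_one hq0).2 hq
    gcongr
  exact Real.rpow_lt_rpow (by positivity) (add_lt_add_of_lt_of_le hfirst hsecond) hq0

theorem blendPow_continuousOn (hg : ContinuousOn g s) (hq : 1 ≤ q) :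
    ContinuousOn (blendPow q c g) s := by
  have hq0 : 0 < q := by linarith
  have hexp : 1 / q ≤ 1 := (div_le_one hq0).2 hq
  exact ((continuousOn_id.mul (hg.rpow_const fun _ _ => Or.inr (by positivity))).add
    (continuousOn_const.mul (hg.rpow_const fun _ _ => Or.inr (by linarith)))).rpow_const
    fun _ _ => Or.inr hq0.le

theorem tendsto_blendPow_atTop (hg : Tendsto g atTop atTop) (hq : 0 < q) (hc : 0 ≤ c) :
    Tendsto (blendPow q c g) atTop atTop := by
  have hfirst : Tendsto (fun p => p * g p ^ (1 / q)) atTop atTop :=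
    tendsto_id.atTop_mul_atTop₀ ((tendsto_rpow_atTop (by positivity)).comp hg)
  refine (tendsto_rpow_atTop hq).comp (tendsto_atTop_mono' _ ?_ hfirst)
  filter_upwards [hg.eventually_ge_atTop 0] with p hp
  exact le_add_of_nonneg_right (mul_nonneg hc (Real.rpow_nonneg hp _))

end BlendPow

theorem strictMonoOn_add_mul_sub {s : Set ℝ} {F' : ℝ → ℝ} {γ : ℝ} (m : ℝ) (hγ : 0 ≤ γ)
    (hF' : MonotoneOn F' s) : StrictMonoOn (fun p => p + γ * F' p - m) s := by
  intro a ha b hb hab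
  have := mul_le_mul_of_nonneg_left (hF' ha hb hab.le) hγ
  dsimp only
  linarith

theorem tendsto_add_mul_sub_atTop {F' : ℝ → ℝ} {γ a : ℝ} (m : ℝ) (hγ : 0 ≤ γ)
    (hF' : MonotoneOn F' (Ici a)) : Tendsto (fun p => p + γ * F' p - m) atTop atTop := by
  refine tendsto_atTop_mono' _ ?_ (tendsto_atTop_add_const_right _ (γ * F' a - m) tendsto_id)
  filter_upwards [eventually_ge_atTop a] with p hp
  have := mul_le_mul_of_nonneg_left (hF' self_mem_Ici hp hp) hγ
  dsimp only [id]
  linarith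

theorem Qfun_zero_eq_blendPow_sub {q q' γ : ℝ} (hq : 1 < q) (hq' : 0 ≤ q') (hγ : 0 ≤ γ)
    (F' : ℝ → ℝ) (m : ℝ) (w : Fin 4 → ℝ) {p : ℝ} (hp : 0 ≤ p) (hg : 0 ≤ p + γ * F' p - m) :
    Qfun q q' γ F' m w p 0 =
      blendPow q (γ ^ (2 / q) * q' ^ (1 - 2 / q)) (fun p => p + γ * F' p - m) p
        - (γ / q') * nrm4 (PK w) ^ q := by
  rw [Qfun, blendPow, add_zero, mul_add_rpow_eq_rpow (by linarith) hq.ne' hg hp (by positivity)]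

/-- with `z₀ = prox_{γF}(m)` (the unique `z₀ ≥ 0` with
`z₀ + γF'(z₀) = m`), the map `p ↦ Q_{m,w}(p,0)` is continuous and strictly
increasing on `[z₀, ∞)`, tends to `+∞`, and `Q_{m,w}(z₀,0) = −(γ/q')|P_K w|^q ≤ 0`;
hence it has a unique root `p* ≥ z₀` whenever `Q_{m,w}(z₀,0) < 0`. -/
theorem stmt13 (q q' γ : ℝ) (hq : 1 < q) (hconj : 1 / q + 1 / q' = 1) (hγ : 0 < γ)
    (F' : ℝ → ℝ)
    (hF'mono : MonotoneOn F' (Set.Ici 0))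
    (hF'cont : ContinuousOn F' (Set.Ici 0))
    (m : ℝ) (w : Fin 4 → ℝ)
    (z₀ : ℝ) (hz₀ : 0 ≤ z₀) (hz : z₀ + γ * F' z₀ = m) :
    ContinuousOn (fun p => Qfun q q' γ F' m w p 0) (Set.Ici z₀)
    ∧ StrictMonoOn (fun p => Qfun q q' γ F' m w p 0) (Set.Ici z₀)
    ∧ Filter.Tendsto (fun p => Qfun q q' γ F' m w p 0) Filter.atTop Filter.atTop
    ∧ Qfun q q' γ F' m w z₀ 0 = -(γ / q') * nrm4 (PK w) ^ q
    ∧ Qfun q q' γ F' m w z₀ 0 ≤ 0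
    ∧ (Qfun q q' γ F' m w z₀ 0 < 0 →
        ∃! p : ℝ, z₀ ≤ p ∧ Qfun q q' γ F' m w p 0 = 0) := by
  have hq' : 0 < q' := by
    have : 1 / q < 1 := (div_lt_one (by linarith)).2 hq
    exact one_div_pos.mp (by linarith)
  have hc : 0 ≤ γ ^ (2 / q) * q' ^ (1 - 2 / q) := by positivity
  set g : ℝ → ℝ := fun p => p + γ * F' p - m
  set C := (γ / q') * nrm4 (PK w) ^ q
  have hsub : Ici z₀ ⊆ Ici 0 := Ici_subset_Ici.2 hz₀
  have hg_mono : StrictMonoOn g (Ici z₀) := strictMonoOn_add_mul_sub m hγ.le (hF'mono.mono hsub)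
  have hg_z₀ : g z₀ = 0 := by
    show z₀ + γ * F' z₀ - m = 0
    rw [hz, sub_self]
  have hg_nonneg : ∀ p ∈ Ici z₀, 0 ≤ g p := fun p hp =>
    hg_z₀ ▸ hg_mono.monotoneOn self_mem_Ici hp hp
  have hQ : EqOn (fun p => Qfun q q' γ F' m w p 0)
      (fun p => blendPow q (γ ^ (2 / q) * q' ^ (1 - 2 / q)) g p - C) (Ici z₀) :=
    fun p hp => Qfun_zero_eq_blendPow_sub hq hq'.le hγ.le F' m w (hsub hp) (hg_nonneg p hp)
  have hcont : ContinuousOn (fun p => Qfun q q' γ F' m w p 0) (Ici z₀) :=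
    ((blendPow_continuousOn ((continuousOn_id.add (continuousOn_const.mul
      (hF'cont.mono hsub))).sub continuousOn_const) hq.le).sub continuousOn_const).congr hQ
  have hmono : StrictMonoOn (fun p => Qfun q q' γ F' m w p 0) (Ici z₀) := fun a ha b hb hab => by
    rw [hQ ha, hQ hb]
    exact sub_lt_sub_right (blendPow_strictMonoOn hsub hg_mono hg_nonneg hq.le hc ha hb hab) C
  have htop : Tendsto (fun p => Qfun q q' γ F' m w p 0) atTop atTop := by
    refine (tendsto_atTop_add_const_right _ (-C) ?_).congr'
      (eventually_ge_atTop z₀ |>.mono fun p hp => (hQ hp).symm)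
    exact tendsto_blendPow_atTop (tendsto_add_mul_sub_atTop m hγ.le hF'mono) (by linarith) hc
  have hval : Qfun q q' γ F' m w z₀ 0 = -C := by
    rw [Qfun, add_zero, show z₀ + γ * F' z₀ - m = 0 from hg_z₀, zero_mul, zero_sub]
  have hC : 0 ≤ C := mul_nonneg (by positivity) (Real.rpow_nonneg (Real.sqrt_nonneg _) _)
  exact ⟨hcont, hmono, htop, hval.trans (neg_mul _ _).symm, hval ▸ neg_nonpos.2 hC,
    fun hneg => existsUnique_eq_of_strictMonoOn_Ici hcont hmono htop hneg.le⟩
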